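/- Let ℓ and N be natural numbers and define u : ℂ → ℂ by u(w) = 2ℓ·log|w| − N·log(1+|w|²) (real logarithms, coerced to ℂ). Then for every z ∈ ℂ with z ≠ 0: ∂(∂̄ u)(z) = −N/(1+|z|²)². (This is the Poincaré–Lelong identity Δ_{g₀} log Φ = −4πN/V for Φ(z) = |z|^(2ℓ)/(1+|z|²)^N, valid away from the zeros of the Higgs field φ = z^ℓ, since Δ_eucl = 4·∂∂̄ and Δ_{g₀} = (π/V)(1+|z|²)²·Δ_eucl for the round metric g₀ of volume V.) -/

import Mathlib

/-!
For a radial function `g(|w|²)` the chain rule gives `∂̄ g(|w|²) = g'(|w|²) w`, so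
`∂̄ log(c + |w|²) = w / (c + |w|²)`, and the product rule gives
`∂ (w · h(|w|²)) = h(|w|²) + |w|² h'(|w|²)`, so `∂ (w / (c + |w|²)) = c / (c + |w|²)²`.
Writing `2ℓ log|w| = ℓ log(0 + |w|²)`, the term with `c = 0` is annihilated, leaving only the
curvature `-N / (1 + |z|²)²` of the term with `c = 1`.
-/

/-- The Wirtinger derivative `∂u`. -/
noncomputable def wdz (u : ℂ → ℂ) (z : ℂ) : ℂ :=
  (1 / 2) * (fderiv ℝ u z 1 - Complex.I • fderiv ℝ u z Complex.I)

/-- The Wirtinger derivative `∂̄u`. -/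
noncomputable def wdzbar (u : ℂ → ℂ) (z : ℂ) : ℂ :=
  (1 / 2) * (fderiv ℝ u z 1 + Complex.I • fderiv ℝ u z Complex.I)

open Complex Filter Topology ContinuousLinearMap

section Linearity

variable {f g : ℂ → ℂ} {z : ℂ}

theorem wdz_congr_of_eventuallyEq (h : f =ᶠ[𝓝 z] g) : wdz f z = wdz g z := by
  rw [wdz, wdz, h.fderiv_eq]

theorem wdz_const_mul_sub_const_mul (a b : ℂ) (hf : DifferentiableAt ℝ f z)
    (hg : DifferentiableAt ℝ g z) :
    wdz (fun v => a * f v - b * g v) z = a * wdz f z - b * wdz g z := by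
  rw [wdz, wdz, wdz, fderiv_fun_sub (hf.const_mul a) (hg.const_mul b), fderiv_const_mul hf,
    fderiv_const_mul hg]
  simp only [sub_apply, smul_apply, smul_eq_mul]
  ring

theorem wdzbar_const_mul_sub_const_mul (a b : ℂ) (hf : DifferentiableAt ℝ f z)
    (hg : DifferentiableAt ℝ g z) :
    wdzbar (fun v => a * f v - b * g v) z = a * wdzbar f z - b * wdzbar g z := by
  rw [wdzbar, wdzbar, wdzbar, fderiv_fun_sub (hf.const_mul a) (hg.const_mul b),
    fderiv_const_mul hf, fderiv_const_mul hg]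
  simp only [sub_apply, smul_apply, smul_eq_mul]
  ring

end Linearity

section Radial

variable {g : ℝ → ℝ} {g' : ℝ} {w : ℂ}

theorem hasFDerivAt_ofReal_comp_norm_sq (hg : HasDerivAt g g' (‖w‖ ^ 2)) :
    HasFDerivAt (fun v : ℂ => (g (‖v‖ ^ 2) : ℂ))
      (ofRealCLM.comp (g' • (2 : ℕ) • innerSL ℝ w)) w :=
  ofRealCLM.hasFDerivAt.comp w (hg.comp_hasFDerivAt w (hasStrictFDerivAt_norm_sq w).hasFDerivAt)

theorem fderiv_ofReal_comp_norm_sq_one (hg : HasDerivAt g g' (‖w‖ ^ 2)) :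
    fderiv ℝ (fun v : ℂ => (g (‖v‖ ^ 2) : ℂ)) w 1 = 2 * g' * w.re := by
  simp [(hasFDerivAt_ofReal_comp_norm_sq hg).fderiv, Complex.inner, mul_comm, mul_left_comm]

theorem fderiv_ofReal_comp_norm_sq_I (hg : HasDerivAt g g' (‖w‖ ^ 2)) :
    fderiv ℝ (fun v : ℂ => (g (‖v‖ ^ 2) : ℂ)) w I = 2 * g' * w.im := by
  simp [(hasFDerivAt_ofReal_comp_norm_sq hg).fderiv, Complex.inner, mul_comm, mul_left_comm]

theorem wdzbar_ofReal_comp_norm_sq (hg : HasDerivAt g g' (‖w‖ ^ 2)) :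
    wdzbar (fun v : ℂ => (g (‖v‖ ^ 2) : ℂ)) w = g' * w := by
  rw [wdzbar, fderiv_ofReal_comp_norm_sq_one hg, fderiv_ofReal_comp_norm_sq_I hg, smul_eq_mul]
  linear_combination (g' : ℂ) * re_add_im w

theorem wdz_ofReal_comp_norm_sq_mul (hg : HasDerivAt g g' (‖w‖ ^ 2)) :
    wdz (fun v : ℂ => (g (‖v‖ ^ 2) : ℂ) * v) w = g (‖w‖ ^ 2) + ‖w‖ ^ 2 * g' := by
  have hG := hasFDerivAt_ofReal_comp_norm_sq hg
  have hnorm : (‖w‖ : ℂ) ^ 2 = w.re ^ 2 + w.im ^ 2 := by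
    rw [← ofReal_pow, Complex.sq_norm, normSq_apply]; push_cast; ring
  rw [wdz, fderiv_fun_mul hG.differentiableAt differentiableAt_fun_id, fderiv_fun_id]
  simp only [add_apply, smul_apply, id_apply, smul_eq_mul, fderiv_ofReal_comp_norm_sq_one hg,
    fderiv_ofReal_comp_norm_sq_I hg, hnorm]
  linear_combination (-(2⁻¹ : ℂ) * g (‖w‖ ^ 2) - g' * w.im ^ 2) * I_sq
    + g' * (w.re - I * w.im) * (re_add_im w).symm

end Radial

section LogPotential

variable {c : ℝ} {w : ℂ}

theorem differentiableAt_ofReal_log_add_norm_sq (hw : c + ‖w‖ ^ 2 ≠ 0) :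
    DifferentiableAt ℝ (fun v : ℂ => (Real.log (c + ‖v‖ ^ 2) : ℂ)) w :=
  (hasFDerivAt_ofReal_comp_norm_sq ((Real.hasDerivAt_log hw).comp_const_add c _)).differentiableAt

theorem wdzbar_ofReal_log_add_norm_sq (hw : c + ‖w‖ ^ 2 ≠ 0) :
    wdzbar (fun v : ℂ => (Real.log (c + ‖v‖ ^ 2) : ℂ)) w = ((c + ‖w‖ ^ 2)⁻¹ : ℝ) * w :=
  wdzbar_ofReal_comp_norm_sq ((Real.hasDerivAt_log hw).comp_const_add c _)

theorem differentiableAt_inv_add_norm_sq_mul (hw : c + ‖w‖ ^ 2 ≠ 0) :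
    DifferentiableAt ℝ (fun v : ℂ => (((c + ‖v‖ ^ 2)⁻¹ : ℝ) : ℂ) * v) w :=
  (hasFDerivAt_ofReal_comp_norm_sq ((hasDerivAt_inv hw).comp_const_add c _)).differentiableAt.mul
    differentiableAt_fun_id

theorem wdz_inv_add_norm_sq_mul (hw : c + ‖w‖ ^ 2 ≠ 0) :
    wdz (fun v : ℂ => (((c + ‖v‖ ^ 2)⁻¹ : ℝ) : ℂ) * v) w = ((c / (c + ‖w‖ ^ 2) ^ 2 : ℝ) : ℂ) := by
  rw [wdz_ofReal_comp_norm_sq_mul ((hasDerivAt_inv hw).comp_const_add c _)]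
  have hw' : (c : ℂ) + (‖w‖ : ℂ) ^ 2 ≠ 0 := by exact_mod_cast hw
  push_cast
  field_simp
  ring

variable {d : ℝ}

theorem wdzbar_const_mul_log_sub_const_mul_log (a b : ℂ) (hc : c + ‖w‖ ^ 2 ≠ 0)
    (hd : d + ‖w‖ ^ 2 ≠ 0) :
    wdzbar (fun v : ℂ => a * (Real.log (c + ‖v‖ ^ 2) : ℂ) - b * (Real.log (d + ‖v‖ ^ 2) : ℂ)) w
      = a * ((((c + ‖w‖ ^ 2)⁻¹ : ℝ) : ℂ) * w) - b * ((((d + ‖w‖ ^ 2)⁻¹ : ℝ) : ℂ) * w) := by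
  rw [wdzbar_const_mul_sub_const_mul a b (differentiableAt_ofReal_log_add_norm_sq hc)
    (differentiableAt_ofReal_log_add_norm_sq hd), wdzbar_ofReal_log_add_norm_sq hc,
    wdzbar_ofReal_log_add_norm_sq hd]

theorem wdz_const_mul_inv_sub_const_mul_inv (a b : ℂ) (hc : c + ‖w‖ ^ 2 ≠ 0)
    (hd : d + ‖w‖ ^ 2 ≠ 0) :
    wdz (fun v : ℂ =>
        a * ((((c + ‖v‖ ^ 2)⁻¹ : ℝ) : ℂ) * v) - b * ((((d + ‖v‖ ^ 2)⁻¹ : ℝ) : ℂ) * v)) w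
      = a * ((c / (c + ‖w‖ ^ 2) ^ 2 : ℝ) : ℂ) - b * ((d / (d + ‖w‖ ^ 2) ^ 2 : ℝ) : ℂ) := by
  rw [wdz_const_mul_sub_const_mul a b (differentiableAt_inv_add_norm_sq_mul hc)
    (differentiableAt_inv_add_norm_sq_mul hd), wdz_inv_add_norm_sq_mul hc,
    wdz_inv_add_norm_sq_mul hd]

end LogPotential

theorem poincare_lelong_away_from_zeros (ℓ N : ℕ) (z : ℂ) (hz : z ≠ 0) :
    wdz (fun w : ℂ => wdzbar (fun v : ℂ =>
        ((2 * (ℓ : ℝ) * Real.log (‖v‖)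
          - (N : ℝ) * Real.log (1 + ‖v‖ ^ 2) : ℝ) : ℂ)) w) z
      = -(N : ℂ) / (1 + ((‖z‖ : ℝ) : ℂ) ^ 2) ^ 2 := by
  have hone {w : ℂ} : 1 + ‖w‖ ^ 2 ≠ 0 := by positivity
  have hzero {w : ℂ} (hw : w ≠ 0) : 0 + ‖w‖ ^ 2 ≠ 0 := by simpa using hw
  have hu : (fun v : ℂ => ((2 * (ℓ : ℝ) * Real.log (‖v‖)
        - (N : ℝ) * Real.log (1 + ‖v‖ ^ 2) : ℝ) : ℂ)) =
      fun v => (ℓ : ℂ) * (Real.log (0 + ‖v‖ ^ 2) : ℂ) - N * (Real.log (1 + ‖v‖ ^ 2) : ℂ) := by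
    funext v
    rw [zero_add, Real.log_pow]
    push_cast
    ring
  rw [hu, wdz_congr_of_eventuallyEq ((eventually_ne_nhds hz).mono fun w hw =>
      wdzbar_const_mul_log_sub_const_mul_log ℓ N (hzero hw) hone),
    wdz_const_mul_inv_sub_const_mul_inv ℓ N (hzero hz) hone]
  push_cast
  ring
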